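/- arXiv:math/0406031 — 2 statements merged into one kernel-verified Lean document; each statement's English description precedes it below -/
import Mathlib

section
/- If S is a finite nonempty set of cells of the hexagonal honeycomb whose exterior perimeter is minimal among all sets of the same cardinality (t(S) = t(|S|)), then S is connected in the adjacency graph and the complement (ℤ × ℤ) \ S is also connected in the adjacency graph (i.e., a minimizing cluster has connected exterior boundary: it has no separate pieces and no holes). -/
/-- The six neighbor directions of the combinatorial hexagonal honeycomb. -/
def hexDirs : Finset (ℤ × ℤ) := {(1,0),(-1,0),(0,1),(0,-1),(1,-1),(-1,1)}

lemma neg_mem_hexDirs {d : ℤ × ℤ} (h : d ∈ hexDirs) : -d ∈ hexDirs := by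
  fin_cases h <;> decide

/-- The adjacency graph of the hexagonal honeycomb. -/
def hexGraph : SimpleGraph (ℤ × ℤ) where
  Adj x y := x - y ∈ hexDirs
  symm := by
    constructor
    intro x y h
    rw [show y - x = -(x - y) by ring]
    exact neg_mem_hexDirs h
  loopless := by
    constructor
    intro x h
    rw [sub_self] at h
    exact absurd h (by decide)

/-- Exterior perimeter: the number of pairs `(x, y)` with `x ∈ S`, `y ∉ S`,
`x` adjacent to `y` (the neighbors of `x` are the cells `x + d`, `d ∈ hexDirs`). -/
def extPer (S : Finset (ℤ × ℤ)) : ℕ :=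
  ∑ x ∈ S, (hexDirs.filter (fun d => x + d ∉ S)).card

/-- `tmin n` is the minimum exterior perimeter over all sets of `n` cells. -/
noncomputable def tmin (n : ℕ) : ℕ :=
  sInf {m : ℕ | ∃ S : Finset (ℤ × ℤ), S.card = n ∧ extPer S = m}

/-! ### Auxiliary counting lemmas -/

/-- Number of (oriented) edges from `A` into `B`. -/
def interE (A B : Finset (ℤ × ℤ)) : ℕ :=
  ∑ x ∈ A, (hexDirs.filter (fun d => x + d ∈ B)).card

lemma interE_card (A B : Finset (ℤ × ℤ)) :
    interE A B = ((A ×ˢ hexDirs).filter (fun p => p.1 + p.2 ∈ B)).card := by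
  rw [Finset.card_filter, Finset.sum_product]
  simp only [interE, Finset.card_filter]

lemma interE_comm (A B : Finset (ℤ × ℤ)) : interE A B = interE B A := by
  rw [interE_card, interE_card]
  apply Finset.card_nbij' (fun p => (p.1 + p.2, -p.2)) (fun p => (p.1 + p.2, -p.2))
  · intro p hp
    simp only [Finset.mem_coe, Finset.mem_filter, Finset.mem_product] at hp ⊢
    exact ⟨⟨by simpa using hp.2, neg_mem_hexDirs hp.1.2⟩, by simpa using hp.1.1⟩
  · intro p hp
    simp only [Finset.mem_coe, Finset.mem_filter, Finset.mem_product] at hp ⊢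
    exact ⟨⟨by simpa using hp.2, neg_mem_hexDirs hp.1.2⟩, by simpa using hp.1.1⟩
  · intro p hp; simp
  · intro p hp; simp

lemma extPer_union_eq {A B : Finset (ℤ × ℤ)} (h : Disjoint A B) :
    extPer (A ∪ B) + interE A B + interE B A = extPer A + extPer B := by
  have key : ∀ (C D : Finset (ℤ × ℤ)), Disjoint C D →
      (∑ x ∈ C, (hexDirs.filter (fun d => x + d ∉ C ∪ D)).card) + interE C D = extPer C := by
    intro C D hCD
    rw [interE, ← Finset.sum_add_distrib]
    apply Finset.sum_congr rfl
    intro x hx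
    rw [← Finset.card_union_of_disjoint, ← Finset.filter_or]
    · apply congrArg
      apply Finset.filter_congr
      intro d hd
      simp only [Finset.mem_union]
      constructor
      · rintro (h1 | h2)
        · exact fun hc => h1 (Or.inl hc)
        · exact fun hc => Finset.disjoint_left.mp hCD hc h2
      · intro hc
        by_cases hD : x + d ∈ D
        · exact Or.inr hD
        · exact Or.inl (by rintro (h1 | h2) <;> [exact hc h1; exact hD h2])
    · rw [Finset.disjoint_filter]
      intro d hd h1 h2
      simp only [Finset.mem_union] at h1
      tauto
  have h1 := key A B h
  have h2 := key B A h.symm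
  rw [Finset.union_comm B A] at h2
  have h3 : extPer (A ∪ B) = (∑ x ∈ A, (hexDirs.filter (fun d => x + d ∉ A ∪ B)).card)
      + (∑ x ∈ B, (hexDirs.filter (fun d => x + d ∉ A ∪ B)).card) := by
    rw [extPer, Finset.sum_union h]
  omega

lemma extPer_image_add (A : Finset (ℤ × ℤ)) (v : ℤ × ℤ) :
    extPer (A.image (· + v)) = extPer A := by
  have hinj : Function.Injective (· + v : ℤ × ℤ → ℤ × ℤ) := add_left_injective v
  rw [extPer, Finset.sum_image (fun a _ b _ h => hinj h)]
  apply Finset.sum_congr rfl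
  intro x hx
  congr 1
  apply Finset.filter_congr
  intro d hd
  have : x + v + d = (x + d) + v := by ring
  rw [this]
  constructor
  · intro h hxd
    exact h (Finset.mem_image_of_mem _ hxd)
  · intro h hm
    obtain ⟨a, ha, heq⟩ := Finset.mem_image.mp hm
    exact h (hinj heq ▸ ha)

lemma extPer_singleton (x : ℤ × ℤ) : extPer {x} = 6 := by
  rw [extPer, Finset.sum_singleton]
  have : hexDirs.filter (fun d => x + d ∉ ({x} : Finset (ℤ × ℤ))) = hexDirs := by
    apply Finset.filter_true_of_mem
    intro d hd
    simp only [Finset.mem_singleton]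
    intro h
    have hd0 : d = 0 := by
      have : x + d = x + 0 := by simpa using h
      exact add_left_cancel this
    subst hd0
    revert hd; decide
  rw [this]; decide

/-- The linear functional used to pick extremal cells. -/
def phi (p : ℤ × ℤ) : ℤ := 3 * p.1 + p.2

lemma phi_add (p q : ℤ × ℤ) : phi (p + q) = phi p + phi q := by
  simp only [phi, Prod.fst_add, Prod.snd_add]; ring

lemma phi_sub (p q : ℤ × ℤ) : phi (p - q) = phi p - phi q := by
  simp only [phi, Prod.fst_sub, Prod.snd_sub]; ring

lemma interE_singleton_le (x : ℤ × ℤ) (A : Finset (ℤ × ℤ))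
    (hmax : ∀ a ∈ A, phi a ≤ phi x) :
    interE {x} A ≤ 3 := by
  rw [interE, Finset.sum_singleton]
  have hsub : hexDirs.filter (fun d => x + d ∈ A) ⊆
      ({(-1,0),(0,-1),(-1,1)} : Finset (ℤ × ℤ)) := by
    intro d hd
    rw [Finset.mem_filter] at hd
    have h1 := hmax _ hd.2
    have h2 : phi (x + d) = phi x + phi d := by simp [phi]; ring
    have h3 : phi d ≤ 0 := by omega
    have hd' := hd.1
    fin_cases hd' <;> simp_all [phi]
  calc (hexDirs.filter (fun d => x + d ∈ A)).card ≤ _ := Finset.card_le_card hsub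
    _ ≤ 3 := by decide

/-! ### Monotonicity of `tmin` -/

lemma exists_removal (T : Finset (ℤ × ℤ)) (hT : T.Nonempty) :
    ∃ x ∈ T, extPer (T.erase x) ≤ extPer T := by
  obtain ⟨x, hxT, hmax⟩ := Finset.exists_max_image T phi hT
  refine ⟨x, hxT, ?_⟩
  have hdisj : Disjoint ({x} : Finset (ℤ × ℤ)) (T.erase x) := by
    simp [Finset.disjoint_singleton_left]
  have heq := extPer_union_eq hdisj
  rw [extPer_singleton] at heq
  have hunion : ({x} : Finset (ℤ × ℤ)) ∪ T.erase x = T := by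
    ext a
    simp only [Finset.mem_union, Finset.mem_singleton, Finset.mem_erase]
    constructor
    · rintro (rfl | ⟨_, h⟩) <;> [exact hxT; exact h]
    · intro ha
      by_cases h : a = x
      · exact Or.inl h
      · exact Or.inr ⟨h, ha⟩
  rw [hunion] at heq
  have h1 : interE {x} (T.erase x) ≤ 3 :=
    interE_singleton_le x _ (fun a ha => hmax a (Finset.mem_of_mem_erase ha))
  have h2 : interE (T.erase x) {x} = interE {x} (T.erase x) := interE_comm _ _
  omega

lemma tmin_le (T : Finset (ℤ × ℤ)) : tmin T.card ≤ extPer T := Nat.sInf_le ⟨T, rfl, rfl⟩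

lemma tmin_exists (n : ℕ) : ∃ T : Finset (ℤ × ℤ), T.card = n ∧ extPer T = tmin n := by
  have hinj : Function.Injective (fun i : ℕ => ((i : ℤ), (0 : ℤ))) := by
    intro a b h
    simpa using congrArg Prod.fst h
  have hcard : ((Finset.range n).image fun i : ℕ => ((i : ℤ), (0 : ℤ))).card = n := by
    rw [Finset.card_image_of_injective _ hinj, Finset.card_range]
  have hne : {m : ℕ | ∃ S : Finset (ℤ × ℤ), S.card = n ∧ extPer S = m}.Nonempty :=
    ⟨extPer ((Finset.range n).image fun i : ℕ => ((i : ℤ), (0 : ℤ))), _, hcard, rfl⟩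
  have := Nat.sInf_mem hne
  exact this

lemma tmin_mono : Monotone tmin := by
  apply monotone_nat_of_le_succ
  intro n
  obtain ⟨T, hcard, hper⟩ := tmin_exists (n + 1)
  have hT : T.Nonempty := Finset.card_pos.mp (by omega)
  obtain ⟨x, hxT, hle⟩ := exists_removal T hT
  have hc : (T.erase x).card = n := by rw [Finset.card_erase_of_mem hxT, hcard]; omega
  calc tmin n = tmin (T.erase x).card := by rw [hc]
    _ ≤ extPer (T.erase x) := tmin_le _
    _ ≤ extPer T := hle
    _ = tmin (n + 1) := hper

/-! ### Reachability infrastructure -/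

lemma induce_adj {X : Set (ℤ × ℤ)} {a b : ℤ × ℤ} (ha : a ∈ X) (hb : b ∈ X)
    (hab : a - b ∈ hexDirs) : (hexGraph.induce X).Adj ⟨a, ha⟩ ⟨b, hb⟩ := hab

lemma reach_line {X : Set (ℤ × ℤ)} {d : ℤ × ℤ} (hd : d ∈ hexDirs) :
    ∀ (n : ℕ) (a b : ℤ × ℤ) (ha : a ∈ X) (hb : b ∈ X), b = a + (n : ℤ) • d →
      (∀ i : ℕ, i ≤ n → a + (i : ℤ) • d ∈ X) →
      (hexGraph.induce X).Reachable ⟨a, ha⟩ ⟨b, hb⟩ := by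
  intro n
  induction n with
  | zero =>
    intro a b ha hb hab _
    have : (⟨a, ha⟩ : X) = ⟨b, hb⟩ := Subtype.ext (by simp [hab])
    rw [this]
  | succ k ih =>
    intro a b ha hb hab h
    have hmid : a + (k : ℤ) • d ∈ X := h k (by omega)
    have step : (hexGraph.induce X).Adj ⟨a + (k : ℤ) • d, hmid⟩ ⟨b, hb⟩ := by
      apply induce_adj
      rw [hab]
      have : a + (k : ℤ) • d - (a + ((k + 1 : ℕ) : ℤ) • d) = -d := by
        push_cast
        rw [add_smul, one_smul]
        abel
      rw [this]
      exact neg_mem_hexDirs hd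
    exact (ih a _ ha hmid rfl (fun i hi => h i (by omega))).trans step.reachable

lemma reach_horiz {X : Set (ℤ × ℤ)} (a : ℤ × ℤ) (c : ℤ)
    (h : ∀ t : ℤ, min a.1 c ≤ t → t ≤ max a.1 c → (t, a.2) ∈ X) :
    (hexGraph.induce X).Reachable
      ⟨a, by simpa using h a.1 (min_le_left _ _) (le_max_left _ _)⟩
      ⟨(c, a.2), h c (min_le_right _ _) (le_max_right _ _)⟩ := by
  rcases le_or_gt a.1 c with hle | hlt
  · have hn : (c, a.2) = a + (((c - a.1).toNat : ℤ)) • ((1, 0) : ℤ × ℤ) := by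
      have : ((c - a.1).toNat : ℤ) = c - a.1 := Int.toNat_of_nonneg (by omega)
      rw [this]; ext <;> simp
    apply reach_line (by decide) _ _ _ _ _ hn
    intro i hi
    have hi' : (i : ℤ) ≤ c - a.1 := by
      have : ((c - a.1).toNat : ℤ) = c - a.1 := Int.toNat_of_nonneg (by omega)
      omega
    have : a + (i : ℤ) • ((1, 0) : ℤ × ℤ) = (a.1 + i, a.2) := by ext <;> simp
    rw [this]
    exact h _ (by omega) (by omega)
  · have hn : (c, a.2) = a + (((a.1 - c).toNat : ℤ)) • ((-1, 0) : ℤ × ℤ) := by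
      have : ((a.1 - c).toNat : ℤ) = a.1 - c := Int.toNat_of_nonneg (by omega)
      rw [this]; ext <;> simp <;> ring
    apply reach_line (by decide) _ _ _ _ _ hn
    intro i hi
    have hi' : (i : ℤ) ≤ a.1 - c := by
      have : ((a.1 - c).toNat : ℤ) = a.1 - c := Int.toNat_of_nonneg (by omega)
      omega
    have : a + (i : ℤ) • ((-1, 0) : ℤ × ℤ) = (a.1 - i, a.2) := by ext <;> simp <;> ring
    rw [this]
    exact h _ (by omega) (by omega)

lemma reach_vert {X : Set (ℤ × ℤ)} (a : ℤ × ℤ) (c : ℤ)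
    (h : ∀ t : ℤ, min a.2 c ≤ t → t ≤ max a.2 c → (a.1, t) ∈ X) :
    (hexGraph.induce X).Reachable
      ⟨a, by simpa using h a.2 (min_le_left _ _) (le_max_left _ _)⟩
      ⟨(a.1, c), h c (min_le_right _ _) (le_max_right _ _)⟩ := by
  rcases le_or_gt a.2 c with hle | hlt
  · have hn : (a.1, c) = a + (((c - a.2).toNat : ℤ)) • ((0, 1) : ℤ × ℤ) := by
      have : ((c - a.2).toNat : ℤ) = c - a.2 := Int.toNat_of_nonneg (by omega)
      rw [this]; ext <;> simp
    apply reach_line (by decide) _ _ _ _ _ hn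
    intro i hi
    have hi' : (i : ℤ) ≤ c - a.2 := by
      have : ((c - a.2).toNat : ℤ) = c - a.2 := Int.toNat_of_nonneg (by omega)
      omega
    have : a + (i : ℤ) • ((0, 1) : ℤ × ℤ) = (a.1, a.2 + i) := by ext <;> simp
    rw [this]
    exact h _ (by omega) (by omega)
  · have hn : (a.1, c) = a + (((a.2 - c).toNat : ℤ)) • ((0, -1) : ℤ × ℤ) := by
      have : ((a.2 - c).toNat : ℤ) = a.2 - c := Int.toNat_of_nonneg (by omega)
      rw [this]; ext <;> simp <;> ring
    apply reach_line (by decide) _ _ _ _ _ hn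
    intro i hi
    have hi' : (i : ℤ) ≤ a.2 - c := by
      have : ((a.2 - c).toNat : ℤ) = a.2 - c := Int.toNat_of_nonneg (by omega)
      omega
    have : a + (i : ℤ) • ((0, -1) : ℤ × ℤ) = (a.1, a.2 - i) := by ext <;> simp <;> ring
    rw [this]
    exact h _ (by omega) (by omega)

lemma outer_reach (S : Finset (ℤ × ℤ)) (R : ℤ) (hR0 : 0 ≤ R)
    (hR : ∀ p ∈ S, |p.1| ≤ R ∧ |p.2| ≤ R) (p : ℤ × ℤ) (hp : p ∉ S)
    (hout : R < |p.1| ∨ R < |p.2|) :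
    (hexGraph.induce ((S : Set (ℤ × ℤ))ᶜ)).Reachable
      ⟨p, by simpa using hp⟩
      ⟨(R + 1, R + 1), by
        simp only [Set.mem_compl_iff, Finset.mem_coe]
        intro h
        have := (hR _ h).1
        rw [show |((R + 1, R + 1) : ℤ × ℤ).1| = R + 1 from abs_of_nonneg (by omega)] at this
        omega⟩ := by
  set X : Set (ℤ × ℤ) := (S : Set (ℤ × ℤ))ᶜ with hX
  have habs : R < |R + 1| := by rw [abs_of_nonneg (by omega)]; omega
  have notinS : ∀ q : ℤ × ℤ, R < |q.1| ∨ R < |q.2| → q ∈ X := by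
    intro q hq
    simp only [hX, Set.mem_compl_iff, Finset.coe_sort_coe, Finset.mem_coe]
    intro hqS
    rcases hq with h | h
    · exact absurd (hR _ hqS).1 (by omega)
    · exact absurd (hR _ hqS).2 (by omega)
  rcases hout with h1 | h2
  · have step1 : (hexGraph.induce X).Reachable ⟨p, by simpa [hX] using hp⟩
        ⟨(p.1, R + 1), notinS _ (Or.inl h1)⟩ :=
      reach_vert p (R + 1) (fun t _ _ => notinS _ (Or.inl h1))
    have step2 : (hexGraph.induce X).Reachable ⟨(p.1, R + 1), notinS _ (Or.inl h1)⟩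
        ⟨(R + 1, R + 1), notinS _ (Or.inr (by simpa using habs))⟩ :=
      reach_horiz (p.1, R + 1) (R + 1) (fun t _ _ => notinS _ (Or.inr (by simpa using habs)))
    exact step1.trans step2
  · have step1 : (hexGraph.induce X).Reachable ⟨p, by simpa [hX] using hp⟩
        ⟨(R + 1, p.2), notinS _ (Or.inr h2)⟩ :=
      reach_horiz p (R + 1) (fun t _ _ => notinS _ (Or.inr h2))
    have step2 : (hexGraph.induce X).Reachable ⟨(R + 1, p.2), notinS _ (Or.inr h2)⟩
        ⟨(R + 1, R + 1), notinS _ (Or.inl (by simpa using habs))⟩ :=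
      reach_vert (R + 1, p.2) (R + 1) (fun t _ _ => notinS _ (Or.inl (by simpa using habs)))
    exact step1.trans step2

theorem stmt2 (S : Finset (ℤ × ℤ)) (hne : S.Nonempty)
    (hmin : extPer S = tmin S.card) :
    (hexGraph.induce (S : Set (ℤ × ℤ))).Connected ∧
    (hexGraph.induce ((S : Set (ℤ × ℤ))ᶜ)).Connected := by
  classical
  constructor
  · -- S is connected
    rw [SimpleGraph.connected_iff]
    refine ⟨?_, ⟨⟨hne.choose, by simpa using hne.choose_spec⟩⟩⟩
    by_contra hpc
    unfold SimpleGraph.Preconnected at hpc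
    push_neg at hpc
    obtain ⟨u, v, huv⟩ := hpc
    set P : ℤ × ℤ → Prop :=
      fun c => ∃ hc : c ∈ (S : Set (ℤ × ℤ)), (hexGraph.induce (S : Set (ℤ × ℤ))).Reachable u ⟨c, hc⟩
      with hP
    set A : Finset (ℤ × ℤ) := S.filter P with hA
    set B : Finset (ℤ × ℤ) := S.filter (fun c => ¬ P c) with hB
    have hunion : A ∪ B = S := Finset.filter_union_filter_not_eq P S
    have hdisj : Disjoint A B := Finset.disjoint_filter_filter_not S S P
    have huA : (u : ℤ × ℤ) ∈ A := by
      rw [hA, Finset.mem_filter]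
      exact ⟨by simpa using u.2, u.2, SimpleGraph.Reachable.refl u⟩
    have hvB : (v : ℤ × ℤ) ∈ B := by
      rw [hB, Finset.mem_filter]
      refine ⟨by simpa using v.2, ?_⟩
      rintro ⟨hc, hr⟩
      exact huv hr
    -- no edges between A and B
    have hiAB : interE A B = 0 := by
      apply Finset.sum_eq_zero
      intro a ha
      rw [Finset.card_eq_zero, Finset.filter_eq_empty_iff]
      intro d hd hadB
      obtain ⟨haS, hcA, hrA⟩ := Finset.mem_filter.mp ha
      obtain ⟨hadS, hnP⟩ := Finset.mem_filter.mp hadB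
      have hadX : a + d ∈ (S : Set (ℤ × ℤ)) := by simpa using hadS
      have adj : (hexGraph.induce (S : Set (ℤ × ℤ))).Adj ⟨a, hcA⟩ ⟨a + d, hadX⟩ := by
        apply induce_adj
        rw [show a - (a + d) = -d by ring]
        exact neg_mem_hexDirs hd
      exact hnP ⟨hadX, hrA.trans adj.reachable⟩
    have hiBA : interE B A = 0 := by rw [interE_comm]; exact hiAB
    -- pick extremal cells and translate A
    obtain ⟨amin, haA, hamin⟩ := Finset.exists_min_image A phi ⟨_, huA⟩
    obtain ⟨bmax, hbB, hbmax⟩ := Finset.exists_max_image B phi ⟨_, hvB⟩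
    set v0 : ℤ × ℤ := bmax + (1, 0) - amin with hv0
    set A' : Finset (ℤ × ℤ) := A.image (· + v0) with hA'
    have hinj : Function.Injective (· + v0 : ℤ × ℤ → ℤ × ℤ) := add_left_injective v0
    have hphi : ∀ a ∈ A, phi (a + v0) = phi a + phi bmax + 3 - phi amin := by
      intro a _
      rw [hv0, phi_add, phi_sub, phi_add]
      have : phi ((1, 0) : ℤ × ℤ) = 3 := by decide
      omega
    have hdisj' : Disjoint A' B := by
      rw [Finset.disjoint_left]
      intro x hx hxB
      obtain ⟨a, haA', rfl⟩ := Finset.mem_image.mp hx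
      have h1 := hphi a haA'
      have h2 := hamin a haA'
      have h3 := hbmax _ hxB
      omega
    have hamem : bmax + (1, 0) ∈ A' := by
      rw [hA', Finset.mem_image]
      exact ⟨amin, haA, by rw [hv0]; abel⟩
    have hiA'B : 1 ≤ interE A' B := by
      rw [interE]
      calc 1 ≤ (hexDirs.filter (fun d => (bmax + (1, 0)) + d ∈ B)).card := by
              apply Finset.card_pos.mpr
              refine ⟨(-1, 0), Finset.mem_filter.mpr ⟨by decide, ?_⟩⟩
              rw [show bmax + (1, 0) + (-1, 0) = bmax by
                rw [show ((-1, 0) : ℤ × ℤ) = -(1, 0) from by decide]; abel]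
              exact hbB
        _ ≤ _ := Finset.single_le_sum
            (f := fun x => (hexDirs.filter (fun d => x + d ∈ B)).card)
            (fun i _ => Nat.zero_le _) hamem
    have e1 := extPer_union_eq hdisj
    rw [hunion, hiAB, hiBA] at e1
    have e2 := extPer_union_eq hdisj'
    have hA'per : extPer A' = extPer A := extPer_image_add A v0
    have hiBA' : interE B A' = interE A' B := interE_comm _ _
    have hcardA' : A'.card = A.card := Finset.card_image_of_injective _ hinj
    have hcardS : A.card + B.card = S.card := by
      rw [← Finset.card_union_of_disjoint hdisj, hunion]
    have hcard' : (A' ∪ B).card = S.card := by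
      rw [Finset.card_union_of_disjoint hdisj', hcardA', hcardS]
    have hminle : extPer S ≤ extPer (A' ∪ B) := by
      rw [hmin, ← hcard']
      exact tmin_le _
    omega
  · -- the complement is connected
    set R : ℤ := ∑ p ∈ S, (|p.1| + |p.2|) with hRdef
    have hR0 : 0 ≤ R := Finset.sum_nonneg fun p _ => by positivity
    have hR : ∀ p ∈ S, |p.1| ≤ R ∧ |p.2| ≤ R := by
      intro p hp
      have h1 : |p.1| + |p.2| ≤ R :=
        Finset.single_le_sum (f := fun q : ℤ × ℤ => |q.1| + |q.2|)
          (fun q _ => by positivity) hp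
      constructor <;> [linarith [abs_nonneg p.2]; linarith [abs_nonneg p.1]]
    set w : ℤ × ℤ := (R + 1, R + 1) with hw
    have hwS : w ∉ S := by
      intro h
      have h2 := (hR _ h).1
      have hw1 : w.1 = R + 1 := rfl
      rw [hw1, abs_of_nonneg (by omega)] at h2
      omega
    set X : Set (ℤ × ℤ) := (S : Set (ℤ × ℤ))ᶜ with hX
    have hwX : w ∈ X := by simpa [hX] using hwS
    rw [SimpleGraph.connected_iff]
    refine ⟨?_, ⟨⟨w, hwX⟩⟩⟩
    by_contra hpc
    unfold SimpleGraph.Preconnected at hpc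
    push_neg at hpc
    obtain ⟨u, v, huv⟩ := hpc
    set wv : X := ⟨w, hwX⟩ with hwv
    obtain ⟨z, hz⟩ : ∃ z : X, ¬ (hexGraph.induce X).Reachable z wv := by
      by_cases h : (hexGraph.induce X).Reachable u wv
      · exact ⟨v, fun hv => huv (h.trans hv.symm)⟩
      · exact ⟨u, h⟩
    set box : Finset (ℤ × ℤ) := Finset.Icc (-R, -R) (R, R) with hbox
    have hboxmem : ∀ q : ℤ × ℤ, q ∉ box → R < |q.1| ∨ R < |q.2| := by
      intro q hq
      rw [hbox, Finset.mem_Icc, Prod.le_def, Prod.le_def] at hq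
      push_neg at hq
      simp only [abs_lt] at *
      by_contra hcon
      push_neg at hcon
      obtain ⟨c1, c2⟩ := hcon
      rw [abs_le] at c1 c2
      rcases le_or_gt (-R) q.1 with h1 | h1
      · rcases le_or_gt (-R) q.2 with h2 | h2
        · have := hq ⟨by exact h1, by exact h2⟩
          omega
        · omega
      · omega
    have hreach_out : ∀ (q : ℤ × ℤ) (hq : q ∈ X), q ∉ box →
        (hexGraph.induce X).Reachable ⟨q, hq⟩ wv := by
      intro q hq hnb
      exact outer_reach S R hR0 hR q (by simpa [hX] using hq) (hboxmem q hnb)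
    have hzbox : (z : ℤ × ℤ) ∈ box := by
      by_contra hnb
      exact hz (hreach_out z z.2 hnb)
    set H : Finset (ℤ × ℤ) := box.filter
      (fun c => ∃ hc : c ∈ X, (hexGraph.induce X).Reachable z ⟨c, hc⟩) with hH
    have hzH : (z : ℤ × ℤ) ∈ H := by
      rw [hH, Finset.mem_filter]
      exact ⟨hzbox, z.2, SimpleGraph.Reachable.refl z⟩
    have hdisjSH : Disjoint S H := by
      rw [Finset.disjoint_right]
      intro c hc
      obtain ⟨_, hcX, _⟩ := Finset.mem_filter.mp hc
      simpa [hX] using hcX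
    have hole : ∀ h ∈ H, ∀ d ∈ hexDirs, h + d ∉ H → h + d ∈ S := by
      intro h hh d hd hnot
      by_contra hs
      obtain ⟨hhbox, hhX, hhr⟩ := Finset.mem_filter.mp hh
      have hdX : h + d ∈ X := by simpa [hX] using hs
      have adj : (hexGraph.induce X).Adj ⟨h, hhX⟩ ⟨h + d, hdX⟩ := by
        apply induce_adj
        rw [show h - (h + d) = -d by ring]
        exact neg_mem_hexDirs hd
      have hreach : (hexGraph.induce X).Reachable z ⟨h + d, hdX⟩ :=
        hhr.trans adj.reachable
      have hdbox : h + d ∈ box := by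
        by_contra hnb
        exact hz (hreach.trans (hreach_out _ hdX hnb))
      exact hnot (Finset.mem_filter.mpr ⟨hdbox, hdX, hreach⟩)
    have hextH : extPer H = interE H S := by
      rw [extPer, interE]
      apply Finset.sum_congr rfl
      intro h hh
      apply congrArg
      apply Finset.filter_congr
      intro d hd
      constructor
      · intro hnH
        exact hole h hh d hd hnH
      · intro hS hHm
        exact Finset.disjoint_left.mp hdisjSH hS hHm
    have hiHS : 1 ≤ interE H S := by
      obtain ⟨hm, hmH, hmmax⟩ := Finset.exists_max_image H phi ⟨_, hzH⟩
      have h1 : hm + (1, 0) ∉ H := by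
        intro hmem
        have := hmmax _ hmem
        simp only [phi, Prod.fst_add, Prod.snd_add] at this
        omega
      have h2 : hm + (1, 0) ∈ S := hole hm hmH (1, 0) (by decide) h1
      rw [interE]
      calc 1 ≤ (hexDirs.filter (fun d => hm + d ∈ S)).card := by
              apply Finset.card_pos.mpr
              exact ⟨(1, 0), Finset.mem_filter.mpr ⟨by decide, h2⟩⟩
        _ ≤ _ := Finset.single_le_sum
            (f := fun x => (hexDirs.filter (fun d => x + d ∈ S)).card)
            (fun i _ => Nat.zero_le _) hmH
    have e := extPer_union_eq hdisjSH
    rw [hextH] at e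
    have hiSH : interE S H = interE H S := interE_comm _ _
    have hcardH : 1 ≤ H.card := Finset.card_pos.mpr ⟨_, hzH⟩
    have hcardUnion : (S ∪ H).card = S.card + H.card :=
      Finset.card_union_of_disjoint hdisjSH
    have hchain : extPer S ≤ extPer (S ∪ H) := by
      calc extPer S = tmin S.card := hmin
        _ ≤ tmin (S ∪ H).card := tmin_mono (by omega)
        _ ≤ extPer (S ∪ H) := tmin_le _
    omega
end

section
/- There exist three sets S₁, S₂, S₃, each consisting of 6 cells of the hexagonal honeycomb, each achieving the minimum exterior perimeter t(6) = 18, such that no two of them are congruent. In particular, perimeter-minimizing clusters of 6 cells in the hexagonal honeycomb are not unique up to congruence. -/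
/-- Two sets of cells are congruent if one is the image of the other under `x ↦ M x + v`,
where `M` is a ℤ-linear automorphism of `ℤ × ℤ` mapping the neighbor set onto itself. -/
def HexCongruent (S₁ S₂ : Finset (ℤ × ℤ)) : Prop :=
  ∃ (M : (ℤ × ℤ) ≃ₗ[ℤ] (ℤ × ℤ)) (v : ℤ × ℤ),
    hexDirs.image (fun d => M d) = hexDirs ∧
    S₂ = S₁.image (fun x => M x + v)


lemma dir_bound (S : Finset (ℤ × ℤ)) (d : ℤ × ℤ) (π φ : ℤ × ℤ → ℤ)
    (hπ : ∀ x, π (x + d) = π x) (hφ : ∀ x, φ x < φ (x + d)) :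
    (S.image π).card ≤ (S.filter (fun x => x + d ∉ S)).card := by
  have key : ∀ v : ℤ, ∃ x, v ∈ S.image π → x ∈ S.filter (fun x => x + d ∉ S) ∧ π x = v := by
    intro v
    by_cases hv : v ∈ S.image π
    swap
    · exact ⟨0, fun h => absurd h hv⟩
    refine ?_
    obtain ⟨x0, hx0, hπ0⟩ := Finset.mem_image.1 hv
    have hne : (S.filter (fun x => π x = v)).Nonempty :=
      ⟨x0, Finset.mem_filter.2 ⟨hx0, hπ0⟩⟩
    obtain ⟨x, hx, hmax⟩ := Finset.exists_max_image _ φ hne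
    have hxS := (Finset.mem_filter.1 hx).1
    have hxv := (Finset.mem_filter.1 hx).2
    refine ⟨x, fun _ => ⟨Finset.mem_filter.2 ⟨hxS, ?_⟩, hxv⟩⟩
    intro hmem
    have hmem' : x + d ∈ S.filter (fun x => π x = v) :=
      Finset.mem_filter.2 ⟨hmem, by rw [hπ]; exact hxv⟩
    exact absurd (hφ x) (not_lt.2 (hmax _ hmem'))
  choose f hf using key
  exact Finset.card_le_card_of_injOn f (fun v hv => (hf v hv).1)
    (fun v1 h1 v2 h2 he => by rw [← (hf v1 h1).2, ← (hf v2 h2).2, he])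

lemma extPer_eq (S : Finset (ℤ × ℤ)) :
    extPer S = ∑ d ∈ hexDirs, (S.filter (fun x => x + d ∉ S)).card := by
  unfold extPer
  simp only [Finset.card_filter]
  rw [Finset.sum_comm]

lemma keyAdd (A B : Finset ℤ) (hA : 2 ≤ A.card) (hB : 3 ≤ B.card) :
    4 ≤ ((A ×ˢ B).image (fun p : ℤ × ℤ => p.1 + p.2)).card := by
  have hAne : A.Nonempty := Finset.card_pos.1 (by omega)
  have hBne : B.Nonempty := Finset.card_pos.1 (by omega)
  have hlt : A.min' hAne < A.max' hAne := Finset.min'_lt_max'_of_card A (by omega)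
  set a1 := A.min' hAne
  set a2 := A.max' hAne
  set T : Finset ℤ := insert (a2 + B.max' hBne) (B.image (fun b => a1 + b)) with hT
  have hnot : a2 + B.max' hBne ∉ B.image (fun b => a1 + b) := by
    intro h
    obtain ⟨b, hb, he⟩ := Finset.mem_image.1 h
    have : b ≤ B.max' hBne := Finset.le_max' B b hb
    omega
  have hTcard : T.card = B.card + 1 := by
    rw [hT, Finset.card_insert_of_notMem hnot,
      Finset.card_image_of_injective _ (add_right_injective a1)]
  have hsub : T ⊆ (A ×ˢ B).image (fun p : ℤ × ℤ => p.1 + p.2) := by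
    intro z hz
    rcases Finset.mem_insert.1 hz with h | h
    · exact Finset.mem_image.2 ⟨(a2, B.max' hBne),
        Finset.mem_product.2 ⟨A.max'_mem hAne, B.max'_mem hBne⟩, h.symm⟩
    · obtain ⟨b, hb, he⟩ := Finset.mem_image.1 h
      exact Finset.mem_image.2 ⟨(a1, b),
        Finset.mem_product.2 ⟨A.min'_mem hAne, hb⟩, he⟩
  have := Finset.card_le_card hsub
  omega

lemma keyAdd2 (A B : Finset ℤ) (hA : 3 ≤ A.card) (hB : 2 ≤ B.card) :
    4 ≤ ((A ×ˢ B).image (fun p : ℤ × ℤ => p.1 + p.2)).card := by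
  have : ((A ×ˢ B).image (fun p : ℤ × ℤ => p.1 + p.2)) =
      ((B ×ˢ A).image (fun p : ℤ × ℤ => p.1 + p.2)) := by
    ext z
    simp only [Finset.mem_image, Finset.mem_product]
    constructor
    · rintro ⟨⟨a, b⟩, ⟨ha, hb⟩, h⟩; exact ⟨(b, a), ⟨hb, ha⟩, by simp at h ⊢; omega⟩
    · rintro ⟨⟨b, a⟩, ⟨hb, ha⟩, h⟩; exact ⟨(a, b), ⟨ha, hb⟩, by simp at h ⊢; omega⟩
  rw [this]
  exact keyAdd B A hB hA

lemma keySub (A B : Finset ℤ) (hA : 2 ≤ A.card) (hB : 3 ≤ B.card) :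
    4 ≤ ((A ×ˢ B).image (fun p : ℤ × ℤ => p.1 - p.2)).card := by
  have hAne : A.Nonempty := Finset.card_pos.1 (by omega)
  have hBne : B.Nonempty := Finset.card_pos.1 (by omega)
  have hlt : A.min' hAne < A.max' hAne := Finset.min'_lt_max'_of_card A (by omega)
  set a1 := A.min' hAne
  set a2 := A.max' hAne
  set T : Finset ℤ := insert (a2 - B.min' hBne) (B.image (fun b => a1 - b)) with hT
  have hnot : a2 - B.min' hBne ∉ B.image (fun b => a1 - b) := by
    intro h
    obtain ⟨b, hb, he⟩ := Finset.mem_image.1 h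
    have : B.min' hBne ≤ b := Finset.min'_le B b hb
    omega
  have hTcard : T.card = B.card + 1 := by
    rw [hT, Finset.card_insert_of_notMem hnot,
      Finset.card_image_of_injective _ (fun x y h => by omega)]
  have hsub : T ⊆ (A ×ˢ B).image (fun p : ℤ × ℤ => p.1 - p.2) := by
    intro z hz
    rcases Finset.mem_insert.1 hz with h | h
    · exact Finset.mem_image.2 ⟨(a2, B.min' hBne),
        Finset.mem_product.2 ⟨A.max'_mem hAne, B.min'_mem hBne⟩, h.symm⟩
    · obtain ⟨b, hb, he⟩ := Finset.mem_image.1 h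
      exact Finset.mem_image.2 ⟨(a1, b),
        Finset.mem_product.2 ⟨A.min'_mem hAne, hb⟩, he⟩
  have := Finset.card_le_card hsub
  omega

lemma abc (S : Finset (ℤ × ℤ)) (h6 : S.card = 6) :
    9 ≤ (S.image Prod.fst).card + (S.image Prod.snd).card +
      (S.image (fun p : ℤ × ℤ => p.1 + p.2)).card := by
  set A := S.image Prod.fst with hA
  set B := S.image Prod.snd with hB
  set C := S.image (fun p : ℤ × ℤ => p.1 + p.2) with hC
  have hAle : A.card ≤ 6 := h6 ▸ Finset.card_image_le
  have hBle : B.card ≤ 6 := h6 ▸ Finset.card_image_le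
  have hCle : C.card ≤ 6 := h6 ▸ Finset.card_image_le
  have hSne : S.Nonempty := Finset.card_pos.1 (by omega)
  have hA1 : 1 ≤ A.card := Finset.card_pos.2 (hSne.image _)
  have hB1 : 1 ≤ B.card := Finset.card_pos.2 (hSne.image _)
  have hC1 : 1 ≤ C.card := Finset.card_pos.2 (hSne.image _)
  -- S ⊆ A ×ˢ B
  have hsubAB : S ⊆ A ×ˢ B := fun p hp =>
    Finset.mem_product.2 ⟨Finset.mem_image_of_mem _ hp, Finset.mem_image_of_mem _ hp⟩
  have hAB : 6 ≤ A.card * B.card := by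
    have := Finset.card_le_card hsubAB
    rwa [Finset.card_product, h6] at this
  -- injection p ↦ (p.1, p.1+p.2) into A ×ˢ C
  have hginj : Function.Injective (fun p : ℤ × ℤ => (p.1, p.1 + p.2)) := by
    rintro ⟨a, b⟩ ⟨c, d⟩ h
    simp only [Prod.mk.injEq] at h ⊢
    omega
  have hAC : 6 ≤ A.card * C.card := by
    have hsub : S.image (fun p : ℤ × ℤ => (p.1, p.1 + p.2)) ⊆ A ×ˢ C := by
      intro q hq
      obtain ⟨p, hp, rfl⟩ := Finset.mem_image.1 hq
      exact Finset.mem_product.2 ⟨Finset.mem_image.2 ⟨p, hp, rfl⟩, Finset.mem_image.2 ⟨p, hp, rfl⟩⟩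
    have := Finset.card_le_card hsub
    rwa [Finset.card_image_of_injective _ hginj, Finset.card_product, h6] at this
  have hhinj : Function.Injective (fun p : ℤ × ℤ => (p.2, p.1 + p.2)) := by
    rintro ⟨a, b⟩ ⟨c, d⟩ h
    simp only [Prod.mk.injEq] at h ⊢
    omega
  have hBC : 6 ≤ B.card * C.card := by
    have hsub : S.image (fun p : ℤ × ℤ => (p.2, p.1 + p.2)) ⊆ B ×ˢ C := by
      intro q hq
      obtain ⟨p, hp, rfl⟩ := Finset.mem_image.1 hq
      exact Finset.mem_product.2 ⟨Finset.mem_image.2 ⟨p, hp, rfl⟩, Finset.mem_image.2 ⟨p, hp, rfl⟩⟩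
    have := Finset.card_le_card hsub
    rwa [Finset.card_image_of_injective _ hhinj, Finset.card_product, h6] at this
  by_contra hcon
  push_neg at hcon
  -- the only surviving cases are (2,3,3), (3,2,3), (3,3,2)
  have hcase : (A.card = 2 ∧ B.card = 3 ∧ C.card = 3) ∨
      (A.card = 3 ∧ B.card = 2 ∧ C.card = 3) ∨
      (A.card = 3 ∧ B.card = 3 ∧ C.card = 2) := by
    rcases Nat.lt_or_ge A.card 3 with h | h
    · rcases Nat.lt_or_ge B.card 3 with h' | h'
      · interval_cases hA : A.card <;> interval_cases hB : B.card <;> omega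
      · interval_cases hA : A.card <;> interval_cases hC : C.card <;> omega
    · rcases Nat.lt_or_ge B.card 3 with h' | h'
      · interval_cases hB : B.card <;> interval_cases hC : C.card <;> omega
      · interval_cases hCc : C.card <;> omega
  rcases hcase with ⟨ha, hb, hc⟩ | ⟨ha, hb, hc⟩ | ⟨ha, hb, hc⟩
  · have heq : S = A ×ˢ B := Finset.eq_of_subset_of_card_le hsubAB
      (by rw [Finset.card_product, ha, hb, h6])
    have h4 := keyAdd A B (by omega) (by omega)
    rw [← heq, ← hC] at h4
    omega
  · have heq : S = A ×ˢ B := Finset.eq_of_subset_of_card_le hsubAB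
      (by rw [Finset.card_product, ha, hb, h6])
    have h4 := keyAdd2 A B (by omega) (by omega)
    rw [← heq, ← hC] at h4
    omega
  · set g : ℤ × ℤ → ℤ × ℤ := fun p => (p.1 + p.2, p.1) with hg
    have hginj : Function.Injective g := by
      rintro ⟨a, b⟩ ⟨c, d⟩ h
      simp only [hg, Prod.mk.injEq] at h ⊢
      omega
    have hsub : S.image g ⊆ C ×ˢ A := by
      intro q hq
      obtain ⟨p, hp, rfl⟩ := Finset.mem_image.1 hq
      exact Finset.mem_product.2 ⟨Finset.mem_image.2 ⟨p, hp, rfl⟩, Finset.mem_image.2 ⟨p, hp, rfl⟩⟩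
    have heq : S.image g = C ×ˢ A := Finset.eq_of_subset_of_card_le hsub
      (by rw [Finset.card_product, hc, ha, Finset.card_image_of_injective _ hginj, h6])
    have h4 := keySub C A (by omega) (by omega)
    rw [← heq, Finset.image_image] at h4
    have : ((fun q : ℤ × ℤ => q.1 - q.2) ∘ g) = Prod.snd := by
      funext p
      simp [hg]
    rw [this, ← hB] at h4
    omega

lemma lower_bound (S : Finset (ℤ × ℤ)) (h6 : S.card = 6) : 18 ≤ extPer S := by
  have habc := abc S h6
  rw [extPer_eq]
  set f : ℤ × ℤ → ℕ := fun d => (S.filter (fun x => x + d ∉ S)).card with hf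
  have b1 : (S.image Prod.snd).card ≤ f (1,0) :=
    dir_bound S (1,0) Prod.snd Prod.fst (fun x => by simp) (fun x => by simp)
  have b2 : (S.image Prod.snd).card ≤ f (-1,0) :=
    dir_bound S (-1,0) Prod.snd (fun x => -x.1) (fun x => by simp)
      (fun x => by simp [Prod.fst_add])
  have b3 : (S.image Prod.fst).card ≤ f (0,1) :=
    dir_bound S (0,1) Prod.fst Prod.snd (fun x => by simp) (fun x => by simp)
  have b4 : (S.image Prod.fst).card ≤ f (0,-1) :=
    dir_bound S (0,-1) Prod.fst (fun x => -x.2) (fun x => by simp)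
      (fun x => by simp [Prod.snd_add])
  have b5 : (S.image (fun p : ℤ × ℤ => p.1 + p.2)).card ≤ f (1,-1) :=
    dir_bound S (1,-1) (fun p => p.1 + p.2) Prod.fst
      (fun x => by simp [Prod.fst_add, Prod.snd_add]; ring)
      (fun x => by simp)
  have b6 : (S.image (fun p : ℤ × ℤ => p.1 + p.2)).card ≤ f (-1,1) :=
    dir_bound S (-1,1) (fun p => p.1 + p.2) (fun x => -x.1)
      (fun x => by simp [Prod.fst_add, Prod.snd_add]; ring)
      (fun x => by simp [Prod.fst_add])
  have hsum : ∑ d ∈ hexDirs, f d =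
      f (1,0) + (f (-1,0) + (f (0,1) + (f (0,-1) + (f (1,-1) + f (-1,1))))) := by
    show ∑ d ∈ ({(1,0),(-1,0),(0,1),(0,-1),(1,-1),(-1,1)} : Finset (ℤ × ℤ)), f d = _
    rw [Finset.sum_insert (by decide), Finset.sum_insert (by decide),
      Finset.sum_insert (by decide), Finset.sum_insert (by decide),
      Finset.sum_insert (by decide), Finset.sum_singleton]
  rw [hsum]
  omega

def deg (S : Finset (ℤ × ℤ)) (x : ℤ × ℤ) : ℕ := (hexDirs.filter (fun d => x + d ∈ S)).card
def deg3 (S : Finset (ℤ × ℤ)) : ℕ := (S.filter (fun x => deg S x = 3)).card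


lemma deg3_congr {S₁ S₂ : Finset (ℤ × ℤ)} (h : HexCongruent S₁ S₂) : deg3 S₁ = deg3 S₂ := by
  obtain ⟨M, v, hM, rfl⟩ := h
  set f : ℤ × ℤ → ℤ × ℤ := fun x => M x + v with hfdef
  have hMinj : Function.Injective (fun d : ℤ × ℤ => M d) := M.injective
  have hfinj : Function.Injective f := by
    intro x y hxy
    simp only [hfdef, add_left_inj] at hxy
    exact M.injective hxy
  have hdeg : ∀ x : ℤ × ℤ, deg (S₁.image f) (f x) = deg S₁ x := by
    intro x
    unfold deg
    have hstep : hexDirs.filter (fun d => f x + d ∈ S₁.image f)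
        = (hexDirs.filter (fun d => x + d ∈ S₁)).image (fun d => M d) := by
      conv_lhs => rw [← hM]
      rw [Finset.filter_image]
      congr 1
      apply Finset.filter_congr
      intro d _
      have hkey : f x + M d = f (x + d) := by
        simp only [hfdef, map_add]
        ring
      rw [hkey]
      simp only [hfinj.mem_finset_image]
    rw [hstep, Finset.card_image_of_injective _ hMinj]
  unfold deg3
  rw [Finset.filter_image, Finset.card_image_of_injective _ hfinj]
  congr 1
  apply Finset.filter_congr
  intro x _
  rw [hdeg x]

def Tset : Finset (ℤ × ℤ) := {(0,0),(1,0),(2,0),(0,1),(1,1),(0,2)}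
def Pset : Finset (ℤ × ℤ) := {(0,0),(1,0),(2,0),(0,1),(1,1),(2,1)}
def Hset : Finset (ℤ × ℤ) := {(0,0),(1,0),(0,1),(-1,1),(-1,0),(0,-1)}

/-- There are three pairwise non-congruent minimizers among clusters of 6 cells. -/
theorem stmt10 :
    tmin 6 = 18 ∧
    ∃ S₁ S₂ S₃ : Finset (ℤ × ℤ),
      (S₁.card = 6 ∧ extPer S₁ = 18) ∧
      (S₂.card = 6 ∧ extPer S₂ = 18) ∧
      (S₃.card = 6 ∧ extPer S₃ = 18) ∧
      ¬ HexCongruent S₁ S₂ ∧ ¬ HexCongruent S₁ S₃ ∧ ¬ HexCongruent S₂ S₃ := by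
  constructor
  · apply le_antisymm
    · exact Nat.sInf_le ⟨Tset, by decide, by decide⟩
    · refine le_csInf ⟨18, Tset, by decide, by decide⟩ ?_
      rintro m ⟨S, hS, rfl⟩
      exact lower_bound S hS
  · refine ⟨Tset, Pset, Hset, ⟨by decide, by decide⟩, ⟨by decide, by decide⟩,
      ⟨by decide, by decide⟩, ?_, ?_, ?_⟩
    · intro h
      have := deg3_congr h
      revert this
      decide
    · intro h
      have := deg3_congr h
      revert this
      decide
    · intro h
      have := deg3_congr h
      revert this
      decide
end
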